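/- arXiv:2409.15369 — 2 statements merged into one kernel-verified Lean document; each statement's English description precedes it below -/
import Mathlib

section
/- For any point x in the pseudo-hyperboloid Q_β^{s,t} (with β < 0), the union of the normal neighborhood of x and the normal neighborhood of its antipodal point -x covers the entire manifold: U_x ∪ U_{-x} = Q_β^{s,t}. -/
open scoped BigOperators

noncomputable def pform (s t : ℕ) (x y : (Fin (t+1) → ℝ) × (Fin s → ℝ)) : ℝ :=
  -(∑ i, x.1 i * y.1 i) + ∑ j, x.2 j * y.2 j

def Qhyp (s t : ℕ) (β : ℝ) : Set ((Fin (t+1) → ℝ) × (Fin s → ℝ)) :=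
  {x | pform s t x x = β}

def normalNbhd (s t : ℕ) (β : ℝ) (x : (Fin (t+1) → ℝ) × (Fin s → ℝ)) :
    Set ((Fin (t+1) → ℝ) × (Fin s → ℝ)) :=
  {y | y ∈ Qhyp s t β ∧ pform s t x y < |β|}

lemma pform_neg_left (s t : ℕ) (x y : (Fin (t+1) → ℝ) × (Fin s → ℝ)) :
    pform s t (-x) y = -(pform s t x y) := by
  simp [pform, Finset.sum_neg_distrib, neg_add, neg_mul]; ring

/-- For any point `x` on the pseudo-hyperboloid `Q_β^{s,t}` (β < 0), the union of the
normal neighborhood of `x` and that of its antipodal point `-x` covers the whole manifold. -/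
theorem stmt_0 (s t : ℕ) (β : ℝ) (hβ : β < 0)
    (x : (Fin (t+1) → ℝ) × (Fin s → ℝ)) (hx : x ∈ Qhyp s t β) :
    normalNbhd s t β x ∪ normalNbhd s t β (-x) = Qhyp s t β := by
  ext y
  simp only [normalNbhd, Set.mem_union, Set.mem_setOf_eq, pform_neg_left]
  constructor
  · rintro (⟨h, _⟩ | ⟨h, _⟩) <;> exact h
  · intro hy
    rw [abs_of_neg hβ]
    rcases lt_or_ge (pform s t x y) (-β) with h | h
    · exact Or.inl ⟨hy, h⟩
    · exact Or.inr ⟨hy, by linarith⟩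
end

section
/- Qualifier monotonicity of ShrinkE: if the box B₂ of fact F₂ contains the box B₁ of fact F₁ (B₁ ⊆ B₂ as boxes in R^n, both obtained from the same spanned box by shrinking), then for any point e ∈ R^n the point-to-box distance satisfies D(e, B₁) ≥ D(e, B₂), where D(e, Box(m,M)) = ‖e-c‖₁/‖max(0,M-m)‖₁ + (‖e-m‖₁ + ‖e-M‖₁ - ‖max(0,M-m)‖₁)² with c = (m+M)/2, assuming the box has positive side lengths. In the special case where both boxes are nonempty with the same center c and B₁ ⊆ B₂ (so componentwise M₁-m₁ ≤ M₂-m₂) and e lies outside B₂, prove D(e,B₁) ≥ D(e,B₂). -/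
open scoped BigOperators

def Box (n : ℕ) (m M : Fin n → ℝ) : Set (Fin n → ℝ) :=
  {x | ∀ i, m i ≤ x i ∧ x i ≤ M i}

/-- The L1 norm `‖v‖₁ = ∑ |v i|`. -/
noncomputable def l1 (n : ℕ) (v : Fin n → ℝ) : ℝ := ∑ i, |v i|

/-- ShrinkE's point-to-box distance
`D(e, Box(m,M)) = ‖e-c‖₁/‖max(0,M-m)‖₁ + (‖e-m‖₁ + ‖e-M‖₁ - ‖max(0,M-m)‖₁)²`,
with `c = (m+M)/2`. -/
noncomputable def ptBoxDist (n : ℕ) (e m M : Fin n → ℝ) : ℝ :=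
  l1 n (fun i => e i - (m i + M i) / 2) / l1 n (fun i => max 0 (M i - m i)) +
  (l1 n (fun i => e i - m i) + l1 n (fun i => e i - M i) -
    l1 n (fun i => max 0 (M i - m i)))^2

lemma key_abs (x a b c d : ℝ) (h1 : c ≤ a) (h2 : a ≤ b) (h3 : b ≤ d) :
    |x - c| + |x - d| - (d - c) ≤ |x - a| + |x - b| - (b - a) := by
  rcases abs_cases (x - a) with ⟨ha, _⟩ | ⟨ha, _⟩ <;>
  rcases abs_cases (x - b) with ⟨hb, _⟩ | ⟨hb, _⟩ <;>
  rcases abs_cases (x - c) with ⟨hc, _⟩ | ⟨hc, _⟩ <;>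
  rcases abs_cases (x - d) with ⟨hd, _⟩ | ⟨hd, _⟩ <;>
  linarith

lemma key_nonneg (x c d : ℝ) : 0 ≤ |x - c| + |x - d| - (d - c) := by
  have h1 : x - c ≤ |x - c| := le_abs_self _
  have h2 : -(x - d) ≤ |x - d| := neg_le_abs _
  linarith

/-- Qualifier monotonicity of ShrinkE (special case): if two nonempty boxes with
positive side lengths share the same center, `B₁ ⊆ B₂` (componentwise
`M₁ - m₁ ≤ M₂ - m₂`), and `e` lies outside the larger box `B₂`, then
`D(e,B₁) ≥ D(e,B₂)`. -/
theorem stmt_16 (n : ℕ) (e m₁ M₁ m₂ M₂ : Fin n → ℝ)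
    (hpos₁ : ∀ i, m₁ i < M₁ i) (hpos₂ : ∀ i, m₂ i < M₂ i)
    (hcenter : ∀ i, m₁ i + M₁ i = m₂ i + M₂ i)
    (hsub : ∀ i, M₁ i - m₁ i ≤ M₂ i - m₂ i)
    (hout : e ∉ Box n m₂ M₂) :
    ptBoxDist n e m₂ M₂ ≤ ptBoxDist n e m₁ M₁ := by
  -- nested boxes
  have hm : ∀ i, m₂ i ≤ m₁ i := fun i => by have := hcenter i; have := hsub i; linarith
  have hM : ∀ i, M₁ i ≤ M₂ i := fun i => by have := hcenter i; have := hsub i; linarith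
  -- the index type is nonempty since e is outside a box
  have hne : Nonempty (Fin n) := by
    by_contra h
    exact hout (fun i => absurd ⟨i⟩ h)
  -- remove the max's
  have hw1 : (fun i => max 0 (M₁ i - m₁ i)) = fun i => M₁ i - m₁ i := by
    funext i; exact max_eq_right (by linarith [hpos₁ i])
  have hw2 : (fun i => max 0 (M₂ i - m₂ i)) = fun i => M₂ i - m₂ i := by
    funext i; exact max_eq_right (by linarith [hpos₂ i])
  have habs1 : l1 n (fun i => M₁ i - m₁ i) = ∑ i, (M₁ i - m₁ i) := by
    unfold l1; exact Finset.sum_congr rfl fun i _ => abs_of_nonneg (by simpa using (hpos₁ i).le)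
  have habs2 : l1 n (fun i => M₂ i - m₂ i) = ∑ i, (M₂ i - m₂ i) := by
    unfold l1; exact Finset.sum_congr rfl fun i _ => abs_of_nonneg (by simpa using (hpos₂ i).le)
  have hD1 : (0:ℝ) < ∑ i, (M₁ i - m₁ i) :=
    Finset.sum_pos (fun i _ => by simpa using sub_pos.2 (hpos₁ i)) ⟨Classical.arbitrary _, Finset.mem_univ _⟩
  have hD12 : ∑ i, (M₁ i - m₁ i) ≤ ∑ i, (M₂ i - m₂ i) :=
    Finset.sum_le_sum fun i _ => hsub i
  have hc : (fun i => e i - (m₂ i + M₂ i) / 2) = fun i => e i - (m₁ i + M₁ i) / 2 := by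
    funext i; rw [hcenter i]
  unfold ptBoxDist
  rw [hw1, hw2, habs1, habs2, hc]
  apply add_le_add
  · apply div_le_div_of_nonneg_left _ hD1 hD12
    exact Finset.sum_nonneg fun i _ => abs_nonneg _
  · -- squared terms
    have hexp : ∀ (m M : Fin n → ℝ),
        l1 n (fun i => e i - m i) + l1 n (fun i => e i - M i) - ∑ i, (M i - m i)
          = ∑ i, (|e i - m i| + |e i - M i| - (M i - m i)) := by
      intro m M
      unfold l1
      simp only [Finset.sum_sub_distrib, Finset.sum_add_distrib]
    rw [hexp, hexp]
    have h0 : 0 ≤ ∑ i, (|e i - m₂ i| + |e i - M₂ i| - (M₂ i - m₂ i)) :=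
      Finset.sum_nonneg fun i _ => key_nonneg _ _ _
    have hle : ∑ i, (|e i - m₂ i| + |e i - M₂ i| - (M₂ i - m₂ i))
        ≤ ∑ i, (|e i - m₁ i| + |e i - M₁ i| - (M₁ i - m₁ i)) :=
      Finset.sum_le_sum fun i _ => key_abs (e i) (m₁ i) (M₁ i) (m₂ i) (M₂ i)
        (hm i) (le_of_lt (hpos₁ i)) (hM i)
    exact pow_le_pow_left₀ h0 hle 2
end
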